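/- The element α = Σ_{k≥0} k! u^k α_{k+1}, where 2αₙ = (x⁻¹⊗x)^{⊗n} − (x⊗x⁻¹)^{⊗n}, is a cycle for the negative cyclic differential b − uB on the normalized Hochschild complex of k[x,x⁻¹] with formal variable u of cohomological degree 2: (b−uB)(α) = 0. -/

import Mathlib

/-!
We model the Hochschild chains of the Laurent polynomial algebra `A = k[x,x⁻¹]`
(the group algebra of `ℤ`) through the canonical identification
`A^{⊗(m)} ≅ k[ℤ^m]`: `Ch k m := (Fin m → ℤ) →₀ k`, the basis vector attached to
`v : Fin m → ℤ` corresponding to the elementary tensor `x^{v 0} ⊗ ⋯ ⊗ x^{v (m-1)}`.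
The normalized Hochschild complex is the quotient by the span of elementary tensors
having a `1` (i.e. exponent `0`) in an interior slot; equalities in the normalized
complex are phrased as membership of the difference in that span (`Degenerate`).
-/

/-- Chains with `m` tensor slots: `A^{⊗ m} ≅ k[ℤ^m]`. -/
abbrev Ch (k : Type*) [Field k] (m : ℕ) := (Fin m → ℤ) →₀ k

namespace HochLaurent

variable (k : Type*) [Field k] [CharZero k]

/-- The `i`-th face: multiply the `i`-th and `(i+1)`-st tensor factors. -/
def mergeFun {m : ℕ} (i : Fin m) (v : Fin (m + 1) → ℤ) : Fin m → ℤ :=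
  fun j => if j < i then v j.castSucc
    else if j = i then v j.castSucc + v j.succ else v j.succ

/-- The last face: multiply the last tensor factor into the first one. -/
def wrapFun {m : ℕ} (v : Fin (m + 1) → ℤ) : Fin m → ℤ :=
  fun j => if (j : ℕ) = 0 then v (Fin.last m) + v j.castSucc else v j.castSucc

/-- The Hochschild differential `b` on chains with `m+1` slots (degree `m`). -/
noncomputable def hb (m : ℕ) : Ch k (m + 1) →ₗ[k] Ch k m :=
  (∑ i : Fin m, ((-1 : k) ^ (i : ℕ)) • Finsupp.lmapDomain k k (mergeFun i))
    + ((-1 : k) ^ m) • Finsupp.lmapDomain k k (wrapFun (m := m))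

/-- `1 ⊗ (-)` : tensoring with `1 = x^0` on the left. -/
noncomputable def oneTensor (m : ℕ) : Ch k m →ₗ[k] Ch k (m + 1) :=
  Finsupp.lmapDomain k k (fun v => Fin.cons 0 v)

/-- The span of elementary tensors with a `1` in an interior slot; the normalized
complex is the quotient by this submodule. -/
noncomputable def Degenerate (m : ℕ) : Submodule k (Ch k m) :=
  Submodule.span k
    {c | ∃ (v : Fin m → ℤ) (j : Fin m), (j : ℕ) ≠ 0 ∧ v j = 0 ∧ c = Finsupp.single v 1}

/-- The element `αₙ` (with `2m` slots, `m = n`), defined by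
`2 αₙ = (x⁻¹ ⊗ x)^{⊗ n} - (x ⊗ x⁻¹)^{⊗ n}`. -/
noncomputable def alphaOf (m : ℕ) : Ch k m :=
  (2 : k)⁻¹ •
    (Finsupp.single (fun j : Fin m => if Even (j : ℕ) then -1 else 1) (1 : k)
      - Finsupp.single (fun j : Fin m => if Even (j : ℕ) then 1 else -1) (1 : k))


/-- Connes's boundary `B` on the normalized complex:
`B(x₀ ⊗ ⋯ ⊗ xₘ) = Σᵢ (-1)^{m i} 1 ⊗ xᵢ ⊗ ⋯ ⊗ xₘ ⊗ x₀ ⊗ ⋯ ⊗ x_{i-1}`. -/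
noncomputable def connesB (m : ℕ) : Ch k (m + 1) →ₗ[k] Ch k (m + 2) :=
  ∑ i : Fin (m + 1), ((-1 : k) ^ (m * (i : ℕ))) • Finsupp.lmapDomain k k
    (fun v : Fin (m + 1) → ℤ => Fin.cons 0 (fun t : Fin (m + 1) => v (t + i)))

end HochLaurent

/-!
Let `w` be the alternating exponent vector `(-1, 1, …, -1, 1)` and `[v] - [-v]` the skew
elementary tensor of `v`, so that `αₙ = ½ ([w] - [-w])`. Adjacent exponents of `w` cancel, so
every interior face of `b` has a `1` in an interior slot: modulo degenerate chains only the
first and the last face survive, and both contribute `[1 ⊗ w] - [1 ⊗ -w]` (now with `w` of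
length `2n + 2`), so `b(α_{n+2}) ≡ σ := ½ · 2 · ([1 ⊗ w] - [1 ⊗ -w])`. Rotating `w` by `i`
multiplies it by `(-1)^i`, which cancels the sign `(-1)^{(2n+1) i}` of `B`, so the `2n + 2`
summands of `B(α_{n+1})` agree and `B(α_{n+1}) = (n + 1) σ`. Hence
`(n+1)! b(α_{n+2}) ≡ n! B(α_{n+1})`. In degree `0`, `b(a ⊗ a') = a a' - a' a = 0`.
-/

namespace HochLaurent

open Finsupp

variable {k : Type*} [Field k] {m : ℕ}

variable (k) in
noncomputable def skewSingle (v : Fin m → ℤ) : Ch k m := single v 1 - single (-v) 1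

theorem skewSingle_neg (v : Fin m → ℤ) : skewSingle k (-v) = -skewSingle k v := by
  simp [skewSingle]

theorem lmapDomain_skewSingle {m' : ℕ} (f : (Fin m → ℤ) → Fin m' → ℤ)
    (hf : ∀ v, f (-v) = -f v) (v : Fin m → ℤ) :
    lmapDomain k k f (skewSingle k v) = skewSingle k (f v) := by
  simp only [skewSingle, map_sub, lmapDomain_apply, mapDomain_single, hf]

theorem skewSingle_mem_degenerate (v : Fin m → ℤ) (j : Fin m) (hj : (j : ℕ) ≠ 0)
    (hv : v j = 0) : skewSingle k v ∈ Degenerate k m :=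
  sub_mem (Submodule.subset_span ⟨v, j, hj, hv, rfl⟩)
    (Submodule.subset_span ⟨-v, j, hj, by simp [hv], rfl⟩)

theorem mergeFun_neg (i : Fin m) (v : Fin (m + 1) → ℤ) :
    mergeFun i (-v) = -mergeFun i v := by
  funext j
  simp only [mergeFun, Pi.neg_apply]
  split_ifs <;> ring

theorem wrapFun_neg (v : Fin (m + 1) → ℤ) : wrapFun (-v) = -wrapFun v := by
  funext j
  simp only [wrapFun, Pi.neg_apply]
  split_ifs <;> ring

theorem mergeFun_self (i : Fin m) (v : Fin (m + 1) → ℤ) :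
    mergeFun i v i = v i.castSucc + v i.succ := by
  simp [mergeFun]

theorem cons_zero_neg (v : Fin m → ℤ) : (Fin.cons 0 (-v) : Fin (m + 1) → ℤ) = -Fin.cons 0 v := by
  funext j
  refine Fin.cases ?_ (fun t => ?_) j <;> simp

theorem hb_skewSingle (v : Fin (m + 1) → ℤ) :
    hb k m (skewSingle k v) = ∑ i : Fin m, (-1 : k) ^ (i : ℕ) • skewSingle k (mergeFun i v)
      + (-1 : k) ^ m • skewSingle k (wrapFun v) := by
  simp [hb, LinearMap.sum_apply, lmapDomain_skewSingle _ (mergeFun_neg _),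
    lmapDomain_skewSingle _ wrapFun_neg]

theorem connesB_skewSingle (v : Fin (m + 1) → ℤ) :
    connesB k m (skewSingle k v) = ∑ i : Fin (m + 1), (-1 : k) ^ (m * (i : ℕ)) •
      skewSingle k (Fin.cons 0 fun t : Fin (m + 1) => v (t + i)) := by
  simp only [connesB, LinearMap.sum_apply, LinearMap.smul_apply]
  refine Finset.sum_congr rfl fun i _ => ?_
  rw [lmapDomain_skewSingle (fun w : Fin (m + 1) → ℤ => Fin.cons 0 fun t => w (t + i))
    fun w => cons_zero_neg _]

theorem hb_skewSingle_sModEq (v : Fin (m + 2) → ℤ)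
    (hv : ∀ i : Fin (m + 1), v i.castSucc + v i.succ = 0) :
    hb k (m + 1) (skewSingle k v) ≡ skewSingle k (mergeFun 0 v)
      + (-1 : k) ^ (m + 1) • skewSingle k (wrapFun v) [SMOD Degenerate k (m + 1)] := by
  have interior_faces : ∑ i : Fin m, (-1 : k) ^ (i.succ : ℕ) •
      skewSingle k (mergeFun i.succ v) ∈ Degenerate k (m + 1) :=
    Submodule.sum_mem _ fun i _ => Submodule.smul_mem _ _ <|
      skewSingle_mem_degenerate _ i.succ (by simp)
        (by rw [mergeFun_self, hv])
  rw [SModEq.sub_mem, hb_skewSingle, Fin.sum_univ_succ]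
  convert interior_faces using 1
  simp only [Fin.val_zero, pow_zero, one_smul]
  abel

-- `alt (2 * n)` is the exponent vector of `(x⁻¹ ⊗ x)^{⊗ n}`.
def alt (m : ℕ) : Fin m → ℤ := fun j => (-1) ^ ((j : ℕ) + 1)

theorem alt_castSucc_add_succ (i : Fin m) : alt (m + 1) i.castSucc + alt (m + 1) i.succ = 0 := by
  simp [alt, pow_succ]

theorem mergeFun_zero_alt : mergeFun 0 (alt (m + 2)) = Fin.cons 0 (alt m) := by
  funext j
  refine Fin.cases ?_ (fun t => ?_) j
  · simpa [mergeFun] using alt_castSucc_add_succ (0 : Fin (m + 1))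
  · simp [mergeFun, alt, Fin.succ_ne_zero, pow_succ]

theorem wrapFun_alt (hm : Even m) : wrapFun (alt (m + 2)) = -Fin.cons 0 (alt m) := by
  funext j
  refine Fin.cases ?_ (fun t => ?_) j
  · simp [wrapFun, alt, hm.neg_one_pow, pow_succ]
  · simp [wrapFun, alt, pow_succ]

theorem alt_comp_add_right (hm : Even m) (i : Fin m) :
    (fun t => alt m (t + i)) = (-1) ^ (i : ℕ) • alt m := by
  funext t
  have h : ∀ a : ℕ, (-1 : ℤ) ^ (a % m) = (-1) ^ a := fun a => by
    rw [neg_one_pow_eq_pow_mod_two, Nat.mod_mod_of_dvd _ (even_iff_two_dvd.mp hm),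
      ← neg_one_pow_eq_pow_mod_two]
  simp only [alt, Fin.val_add, pow_succ, h, Pi.smul_apply, smul_eq_mul]
  ring

theorem alphaOf_eq : alphaOf k m = (2 : k)⁻¹ • skewSingle k (alt m) := by
  simp only [alphaOf, skewSingle]
  congr 3 <;> funext j <;> rcases Nat.even_or_odd j with h | h <;>
    simp [alt, pow_succ, h, h.neg_one_pow, Nat.not_even_iff_odd]

theorem mergeFun_zero_eq_wrapFun (v : Fin 2 → ℤ) : mergeFun 0 v = wrapFun v := by
  funext j
  fin_cases j
  simp [mergeFun, wrapFun, add_comm]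

theorem hb_alphaOf_two : hb k 1 (alphaOf k 2) = 0 := by
  simp [alphaOf_eq, hb_skewSingle, mergeFun_zero_eq_wrapFun]

theorem hb_skewSingle_alt (hm : Even m) :
    hb k (m + 1) (skewSingle k (alt (m + 2)))
      ≡ (2 : k) • skewSingle k (Fin.cons 0 (alt m)) [SMOD Degenerate k (m + 1)] := by
  have h := hb_skewSingle_sModEq (k := k) (alt (m + 2)) alt_castSucc_add_succ
  rwa [mergeFun_zero_alt, wrapFun_alt hm, skewSingle_neg, hm.add_one.neg_one_pow, neg_one_smul,
    neg_neg, ← two_smul k] at h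

theorem connesB_skewSingle_alt (hm : Odd m) :
    connesB k m (skewSingle k (alt (m + 1)))
      = (m + 1) • skewSingle k (Fin.cons 0 (alt (m + 1))) := by
  have term : ∀ i : Fin (m + 1), (-1 : k) ^ (m * (i : ℕ)) •
      skewSingle k (Fin.cons 0 fun t : Fin (m + 1) => alt (m + 1) (t + i))
        = skewSingle k (Fin.cons 0 (alt (m + 1))) := by
    intro i
    rw [alt_comp_add_right hm.add_one]
    rcases Nat.even_or_odd (i : ℕ) with hi | hi
    · simp [hi.neg_one_pow, (hi.mul_left m).neg_one_pow]
    · simp [hi.neg_one_pow, (hm.mul hi).neg_one_pow, cons_zero_neg, skewSingle_neg]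
  rw [connesB_skewSingle, Finset.sum_congr rfl fun i _ => term i, Finset.sum_const,
    Finset.card_univ, Fintype.card_fin]

end HochLaurent

open HochLaurent

/- The `u⁰`-coefficient of `(b - uB)(α)` is `b(α₁)` and its `u^{n+1}`-coefficient is
`(n+1)! b(α_{n+2}) - n! B(α_{n+1})`. -/
theorem stmt9_general (k : Type*) [Field k] :
    hb k 1 (alphaOf k 2) ∈ Degenerate k 1
    ∧ ∀ n : ℕ,
        (Nat.factorial (n + 1)) • hb k (2 * n + 3) (alphaOf k (2 * n + 4))
          - (Nat.factorial n) • connesB k (2 * n + 1) (alphaOf k (2 * n + 2))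
          ∈ Degenerate k (2 * n + 3) := by
  refine ⟨hb_alphaOf_two (k := k) ▸ zero_mem _, fun n => ?_⟩
  set s := skewSingle k (Fin.cons 0 (alt (2 * n + 2)))
  -- `2⁻¹ • 2` is kept as it stands: `(2 : k)⁻¹ = 0` in characteristic 2.
  have hb_alpha : hb k (2 * n + 3) (alphaOf k (2 * n + 4)) ≡ (2 : k)⁻¹ • (2 : k) • s
      [SMOD Degenerate k (2 * n + 3)] := by
    rw [alphaOf_eq, map_smul]
    exact (hb_skewSingle_alt ⟨n + 1, by ring⟩).smul _
  have connesB_alpha : connesB k (2 * n + 1) (alphaOf k (2 * n + 2))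
      = (2 : k)⁻¹ • (2 * n + 2) • s := by
    rw [alphaOf_eq, map_smul, connesB_skewSingle_alt (odd_two_mul_add_one n)]
  have cancel : (Nat.factorial (n + 1)) • hb k (2 * n + 3) (alphaOf k (2 * n + 4))
      - (Nat.factorial n) • connesB k (2 * n + 1) (alphaOf k (2 * n + 2))
      = (Nat.factorial (n + 1)) • (hb k (2 * n + 3) (alphaOf k (2 * n + 4))
        - (2 : k)⁻¹ • (2 : k) • s) := by
    rw [connesB_alpha, Nat.factorial_succ]
    module
  rw [cancel]
  exact Submodule.smul_of_tower_mem _ _ (SModEq.sub_mem.mp hb_alpha)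

theorem stmt9 (k : Type*) [Field k] [CharZero k] :
    hb k 1 (alphaOf k 2) ∈ Degenerate k 1
    ∧ ∀ n : ℕ,
        (Nat.factorial (n + 1)) • hb k (2 * n + 3) (alphaOf k (2 * n + 4))
          - (Nat.factorial n) • connesB k (2 * n + 1) (alphaOf k (2 * n + 2))
          ∈ Degenerate k (2 * n + 3) :=
  stmt9_general k
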